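/- arXiv:2003.07545 — 4 statements merged into one kernel-verified Lean document; each statement's English description precedes it below -/
import Mathlib

section
/- Let X be a real symmetric n×n matrix with all eigenvalues strictly less than 1 in absolute value (‖X‖_∞ := max_j |λ_j(X)| < 1). Then Tr(X) ≥ log det(I + X) ≥ Tr(X) − ‖X‖²_F / (2(1 − ‖X‖_∞)), where ‖X‖_F is the Frobenius norm. -/
/-!
Diagonalizing `X`, all three quantities become sums over the eigenvalues `λ_j`: `Tr X = ∑ λ_j`,
`Tr (Xᵀ X) = ∑ λ_j²` and `log det (I + X) = ∑ log (1 + λ_j)`. The theorem then follows termwise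
from `log (1 + x) ≤ x` and the second-order Taylor bound
`|log (1 + x) - x| ≤ x² / (2 (1 - |x|))` for `|x| < 1`.
-/

open Matrix

namespace Matrix.IsHermitian

variable {n 𝕜 : Type*} [RCLike 𝕜] [Fintype n] [DecidableEq n] {A : Matrix n n 𝕜}

theorem det_cfc (hA : A.IsHermitian) (f : ℝ → ℝ) :
    (cfc f A).det = ∏ i, (f (hA.eigenvalues i) : 𝕜) := by
  rw [hA.cfc_eq, IsHermitian.cfc, Unitary.conjStarAlgAut_apply, det_mul_comm, ← mul_assoc]
  simp

theorem trace_cfc (hA : A.IsHermitian) (f : ℝ → ℝ) :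
    (cfc f A).trace = ∑ i, (f (hA.eigenvalues i) : 𝕜) := by
  rw [hA.cfc_eq, IsHermitian.cfc, Unitary.conjStarAlgAut_apply, trace_mul_cycle]
  simp

theorem det_one_add (hA : A.IsHermitian) : (1 + A).det = ∏ i, (1 + (hA.eigenvalues i : 𝕜)) := by
  have : 1 + A = cfc (fun x : ℝ => 1 + x) A := by
    rw [cfc_const_add _ _ A, cfc_id' ℝ A, map_one]
  simpa [this] using hA.det_cfc (fun x => 1 + x)

theorem trace_mul_self (hA : A.IsHermitian) :
    (A * A).trace = ∑ i, (hA.eigenvalues i : 𝕜) ^ 2 := by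
  have : A * A = cfc (fun x : ℝ => x ^ 2) A := by
    rw [cfc_pow _ _ A, cfc_id' ℝ A, sq]
  simp only [this, hA.trace_cfc, RCLike.ofReal_pow]

end Matrix.IsHermitian

namespace Real

theorem abs_log_one_add_sub_self_le {x : ℝ} (hx : |x| < 1) :
    |log (1 + x) - x| ≤ x ^ 2 / (2 * (1 - |x|)) := by
  have h := Complex.norm_log_one_add_sub_self_le (z := x) (by simpa using hx)
  rw [← Complex.ofReal_one, ← Complex.ofReal_add, ← Complex.ofReal_log (by linarith [neg_abs_le x]),
    ← Complex.ofReal_sub, Complex.norm_real, Complex.norm_real] at h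
  simp only [Real.norm_eq_abs, sq_abs] at h
  convert h using 1
  field_simp

theorem sub_sq_div_le_log_one_add {x s : ℝ} (hx : |x| ≤ s) (hs : s < 1) :
    x - x ^ 2 / (2 * (1 - s)) ≤ log (1 + x) := by
  have hx1 : 0 < 1 - |x| := by linarith
  calc x - x ^ 2 / (2 * (1 - s)) ≤ x - x ^ 2 / (2 * (1 - |x|)) := by gcongr
    _ ≤ log (1 + x) := by
      linarith [neg_abs_le (log (1 + x) - x), abs_log_one_add_sub_self_le (hx.trans_lt hs)]

end Real

/-- For a symmetric matrix `X` with all eigenvalues less than `1` in absolute value,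
`Tr(X) ≥ log det(I + X) ≥ Tr(X) − ‖X‖_F² / (2(1 − ‖X‖_∞))`, where
`‖X‖_∞ = max_j |λ_j(X)|` and `‖X‖_F² = Tr(XᵀX)`. -/
theorem stmt6 {n : ℕ} (X : Matrix (Fin n) (Fin n) ℝ) (hX : X.IsHermitian)
    (hspec : (⨆ j, |hX.eigenvalues j|) < 1) :
    Real.log (1 + X).det ≤ Matrix.trace X ∧
      Matrix.trace X - Matrix.trace (Xᵀ * X) / (2 * (1 - ⨆ j, |hX.eigenvalues j|)) ≤
        Real.log (1 + X).det := by
  set s := ⨆ j, |hX.eigenvalues j|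
  have hle (j : Fin n) : |hX.eigenvalues j| ≤ s :=
    le_ciSup (f := fun j => |hX.eigenvalues j|) (Set.finite_range _).bddAbove j
  have hpos (j : Fin n) : 0 < 1 + hX.eigenvalues j := by
    linarith [neg_abs_le (hX.eigenvalues j), hle j]
  have hlog : Real.log (1 + X).det = ∑ j, Real.log (1 + hX.eigenvalues j) := by
    rw [hX.det_one_add]
    simpa using Real.log_prod (fun j _ => (hpos j).ne')
  have htr : Xᵀ = X := by simpa using hX.eq
  simp only [hlog, hX.trace_eq_sum_eigenvalues, htr, hX.trace_mul_self, RCLike.ofReal_real_eq_id,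
    id, Finset.sum_div, ← Finset.sum_sub_distrib]
  constructor
  · exact Finset.sum_le_sum fun j _ => by linarith [Real.log_le_sub_one_of_pos (hpos j)]
  · exact Finset.sum_le_sum fun j _ => Real.sub_sq_div_le_log_one_add (hle j) hspec
end

section
/- The function P(D, κ) = log det(M − D) + log det(κD − M) + log det D is jointly concave in (κ, D) on any convex domain of the form (κ̲, ∞) × 𝒟(κ̲), where M is a fixed symmetric positive definite matrix and 𝒟(κ̲) is the set of positive definite matrices D with M − D ≻ 0 and κ̲D − M ≻ 0. -/
/-!
`log det` is concave and monotone for the Loewner order on positive definite matrices, so it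
maps Loewner-concave matrix functions to concave functions. This handles `log det (M - D)` and
`log det D` at once. For the middle term write `κ D - M = κ (D - κ⁻¹ M)`, so that
`log det (κ D - M) = n log κ + log det (D - κ⁻¹ M)`; the map `(κ, D) ↦ D - κ⁻¹ M` is
Loewner-concave on `κ > 0` because `κ ↦ κ⁻¹` is convex and `M ⪰ 0`. On the domain, `κ̲ > 0`
follows from `κ̲ D ≻ M ≻ 0` (when `n > 0`), and then `κ D - M ⪰ κ̲ D - M ≻ 0`.
-/

open Matrix Set Real
open scoped MatrixOrder

namespace Matrix

variable {ι : Type*}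

theorem convex_setOf_posDef : Convex ℝ {A : Matrix ι ι ℝ | A.PosDef} := by
  intro X hX Y hY a b ha hb hab
  rcases ha.eq_or_lt with rfl | ha
  · simp_all
  · exact (hX.smul ha).add_posSemidef (hY.posSemidef.smul hb)

theorem concaveOn_snd_sub_inv_smul {M : Matrix ι ι ℝ} (hM : M.PosSemidef) :
    ConcaveOn ℝ (Ioi 0 ×ˢ univ) fun q : ℝ × Matrix ι ι ℝ => q.2 - q.1⁻¹ • M := by
  refine ⟨(convex_Ioi 0).prod convex_univ, ?_⟩
  rintro ⟨κ₁, D₁⟩ ⟨hκ₁, -⟩ ⟨κ₂, D₂⟩ ⟨hκ₂, -⟩ a b ha hb hab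
  have hinv : (a • κ₁ + b • κ₂)⁻¹ ≤ a • κ₁⁻¹ + b • κ₂⁻¹ := by
    simpa using (convexOn_zpow (𝕜 := ℝ) (-1)).2 hκ₁ hκ₂ ha hb hab
  have hgap : (a • κ₁ + b • κ₂, a • D₁ + b • D₂).2 - (a • κ₁ + b • κ₂, a • D₁ + b • D₂).1⁻¹ • M
      - (a • (D₁ - κ₁⁻¹ • M) + b • (D₂ - κ₂⁻¹ • M))
      = (a • κ₁⁻¹ + b • κ₂⁻¹ - (a • κ₁ + b • κ₂)⁻¹) • M := by
    module
  exact le_iff.2 (hgap ▸ hM.smul (sub_nonneg.2 hinv))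

theorem posDef_smul_sub_of_le {D M : Matrix ι ι ℝ} (hD : D.PosDef) {c κ : ℝ}
    (hc : (c • D - M).PosDef) (hcκ : c ≤ κ) : (κ • D - M).PosDef := by
  have hsplit : κ • D - M = (c • D - M) + (κ - c) • D := by module
  rw [hsplit]
  exact hc.add_posSemidef (hD.posSemidef.smul (sub_nonneg.2 hcκ))

variable [Fintype ι]

theorem pos_of_posDef_smul_sub [Nonempty ι] {D M : Matrix ι ι ℝ} (hD : D.PosDef)
    (hM : M.PosSemidef) {c : ℝ} (hc : (c • D - M).PosDef) : 0 < c := by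
  have htrace := hc.trace_pos
  rw [trace_sub, trace_smul, smul_eq_mul, sub_pos] at htrace
  exact pos_of_mul_pos_left (hM.trace_nonneg.trans_lt htrace) hD.trace_pos.le

variable [DecidableEq ι]

theorem IsHermitian.det_cfc_s14 {A : Matrix ι ι ℝ} (hA : A.IsHermitian) (f : ℝ → ℝ) :
    (cfc f A).det = ∏ i, f (hA.eigenvalues i) := by
  simp [hA.cfc_eq, IsHermitian.cfc, -Unitary.conjStarAlgAut_apply]

theorem IsHermitian.det_smul_one_add_smul {A : Matrix ι ι ℝ} (hA : A.IsHermitian) (a b : ℝ) :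
    (a • 1 + b • A).det = ∏ i, (a + b * hA.eigenvalues i) := by
  have hcfc : a • 1 + b • A = cfc (fun x => a + b * x) A := by
    rw [cfc_add A (fun _ => a) (fun x => b * x), cfc_const a A, cfc_const_mul b (fun x => x) A,
      cfc_id' ℝ A, Algebra.algebraMap_eq_smul_one]
  rw [hcfc, hA.det_cfc_s14]

theorem PosDef.exists_eq_star_mul_self {X : Matrix ι ι ℝ} (hX : X.PosDef) :
    ∃ B : Matrix ι ι ℝ, IsUnit B ∧ X = star B * B := by
  obtain ⟨B, rfl⟩ := CStarAlgebra.nonneg_iff_eq_star_mul_self.mp hX.posSemidef.nonneg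
  have hdet := hX.det_pos
  rw [det_mul] at hdet
  exact ⟨B, (isUnit_iff_isUnit_det B).2 (isUnit_of_mul_isUnit_right hdet.ne'.isUnit), rfl⟩

/-- The `μ i` are the eigenvalues of `Y` relative to `X`: those of `B⁻ᴴ Y B⁻¹` for `X = Bᴴ B`. -/
theorem PosDef.exists_det_smul_add_smul_eq {X Y : Matrix ι ι ℝ} (hX : X.PosDef)
    (hY : Y.PosSemidef) : ∃ μ : ι → ℝ, (∀ i, 0 ≤ μ i) ∧
      ∀ a b : ℝ, (a • X + b • Y).det = X.det * ∏ i, (a + b * μ i) := by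
  obtain ⟨B, hB, rfl⟩ := hX.exists_eq_star_mul_self
  set S := star B⁻¹ * Y * B⁻¹
  have hYS : Y = star B * S * B := by
    have hB' := (isUnit_iff_isUnit_det B).1 hB
    simp only [S, ← mul_assoc, ← star_mul, nonsing_inv_mul _ hB', star_one, one_mul]
    rw [mul_assoc, nonsing_inv_mul _ hB', mul_one]
  rw [hYS, hB.posSemidef_star_left_conjugate_iff] at hY
  refine ⟨hY.1.eigenvalues, hY.eigenvalues_nonneg, fun a b => ?_⟩
  have hcongr : a • (star B * B) + b • Y = star B * (a • 1 + b • S) * B := by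
    rw [hYS]
    simp only [mul_add, add_mul, mul_smul_comm, smul_mul_assoc, mul_one]
  rw [hcongr, det_mul, det_mul, det_mul, hY.1.det_smul_one_add_smul]
  ring

theorem PosDef.det_le_det {A B : Matrix ι ι ℝ} (hA : A.PosDef) (hAB : A ≤ B) :
    A.det ≤ B.det := by
  obtain ⟨μ, hμ, hdet⟩ := hA.exists_det_smul_add_smul_eq hAB
  have hB : B.det = A.det * ∏ i, (1 + μ i) := by simpa using hdet 1 1
  rw [hB]
  exact le_mul_of_one_le_right hA.det_pos.le
    (Finset.one_le_prod fun i _ => le_add_of_nonneg_right (hμ i))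

theorem concaveOn_log_det : ConcaveOn ℝ {A : Matrix ι ι ℝ | A.PosDef} fun A => log A.det := by
  refine ⟨convex_setOf_posDef, fun X hX Y hY a b ha hb hab => ?_⟩
  obtain ⟨μ, hμ, hdet⟩ := hX.exists_det_smul_add_smul_eq hY.posSemidef
  have hdetY : Y.det = X.det * ∏ i, μ i := by simpa using hdet 0 1
  have hμ_pos : ∀ i, 0 < μ i := fun i => (hμ i).lt_of_ne' fun h => hY.det_pos.ne' <| by
    rw [hdetY, Finset.prod_eq_zero (Finset.mem_univ i) h, mul_zero]
  have hcombo_pos (i : ι) : 0 < a + b * μ i := by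
    simpa using (convex_Ioi (0 : ℝ)) (mem_Ioi.2 one_pos) (hμ_pos i) ha hb hab
  have hlog_combo : b * ∑ i, log (μ i) ≤ ∑ i, log (a + b * μ i) := by
    rw [Finset.mul_sum]
    refine Finset.sum_le_sum fun i _ => ?_
    simpa using strictConcaveOn_log_Ioi.concaveOn.2 (mem_Ioi.2 one_pos) (hμ_pos i) ha hb hab
  have hX₀ := hX.det_pos.ne'
  simp only [smul_eq_mul]
  rw [hdet, hdetY, log_mul hX₀ (Finset.prod_ne_zero_iff.2 fun i _ => (hμ_pos i).ne'),
    log_mul hX₀ (Finset.prod_ne_zero_iff.2 fun i _ => (hcombo_pos i).ne'),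
    log_prod fun i _ => (hμ_pos i).ne', log_prod fun i _ => (hcombo_pos i).ne']
  linear_combination hlog_combo + log X.det * hab

end Matrix

namespace ConcaveOn

variable {ι E : Type*} [AddCommGroup E] [Module ℝ E] {s : Set E} {g : E → Matrix ι ι ℝ}

theorem convex_setOf_posDef (hg : ConcaveOn ℝ s g) : Convex ℝ {x ∈ s | (g x).PosDef} := by
  rintro x ⟨hxs, hx⟩ y ⟨hys, hy⟩ a b ha hb hab
  refine ⟨hg.1 hxs hys ha hb hab, ?_⟩
  simpa using (Matrix.convex_setOf_posDef hx hy ha hb hab).add_posSemidef (hg.2 hxs hys ha hb hab)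

theorem log_det [Fintype ι] [DecidableEq ι] (hg : ConcaveOn ℝ s g) :
    ConcaveOn ℝ {x ∈ s | (g x).PosDef} fun x => log (g x).det := by
  refine ⟨hg.convex_setOf_posDef, fun _ hx _ hy _ _ ha hb hab => ?_⟩
  have hcombo := Matrix.convex_setOf_posDef hx.2 hy.2 ha hb hab
  exact (concaveOn_log_det.2 hx.2 hy.2 ha hb hab).trans <|
    log_le_log hcombo.det_pos (hcombo.det_le_det (hg.2 hx.1 hy.1 ha hb hab))

end ConcaveOn

namespace Matrix

variable {ι : Type*} [Fintype ι] [DecidableEq ι]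

theorem concaveOn_log_det_smul_sub {M : Matrix ι ι ℝ} (hM : M.PosSemidef) :
    ConcaveOn ℝ {q : ℝ × Matrix ι ι ℝ | 0 < q.1 ∧ (q.1 • q.2 - M).PosDef}
      fun q => log (q.1 • q.2 - M).det := by
  have hfactor {κ : ℝ} (hκ : 0 < κ) (D : Matrix ι ι ℝ) : κ • D - M = κ • (D - κ⁻¹ • M) := by
    rw [smul_sub, smul_smul, mul_inv_cancel₀ hκ.ne', one_smul]
  have hdomain : {q : ℝ × Matrix ι ι ℝ | 0 < q.1 ∧ (q.1 • q.2 - M).PosDef} =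
      {q ∈ Ioi 0 ×ˢ univ | (q.2 - q.1⁻¹ • M).PosDef} := by
    ext ⟨κ, D⟩
    simp only [mem_ofPred_eq, mem_prod, mem_Ioi, mem_univ, and_true]
    refine and_congr_right fun hκ => ?_
    rw [hfactor hκ]
    refine ⟨fun h => ?_, fun h => h.smul hκ⟩
    simpa [smul_smul, hκ.ne'] using h.smul (inv_pos.2 hκ)
  have hlog : ConcaveOn ℝ (Ioi 0 ×ˢ univ) fun q : ℝ × Matrix ι ι ℝ =>
      Fintype.card ι * log q.1 := by
    rw [prod_univ]
    exact (strictConcaveOn_log_Ioi.concaveOn.comp_linearMap (LinearMap.fst ℝ ℝ _)).smul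
      (Nat.cast_nonneg _)
  have hg := concaveOn_snd_sub_inv_smul hM
  rw [hdomain]
  refine ((hlog.subset (sep_subset _ _) hg.convex_setOf_posDef).add hg.log_det).congr fun q hq => ?_
  simp only [Pi.add_apply]
  rw [hfactor hq.1.1, det_smul, log_mul (pow_ne_zero _ hq.1.1.ne') hq.2.det_pos.ne', log_pow]

end Matrix

/-- The potential `P(D, κ) = log det(M − D) + log det(κD − M) + log det D` is jointly
concave in `(κ, D)` on the convex domain `(κ̲, ∞) × 𝒟(κ̲)`, where `𝒟(κ̲)` is the set of
positive definite `D` with `M − D ≻ 0` and `κ̲D − M ≻ 0`. -/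
theorem stmt14 {n : ℕ} (M : Matrix (Fin n) (Fin n) ℝ) (hM : M.PosDef) (κlow : ℝ) :
    ConcaveOn ℝ
      {q : ℝ × Matrix (Fin n) (Fin n) ℝ |
        κlow < q.1 ∧ q.2.PosDef ∧ (M - q.2).PosDef ∧ (κlow • q.2 - M).PosDef}
      (fun q => Real.log (M - q.2).det + Real.log (q.1 • q.2 - M).det +
        Real.log q.2.det) := by
  set S := {q : ℝ × Matrix (Fin n) (Fin n) ℝ |
    κlow < q.1 ∧ q.2.PosDef ∧ (M - q.2).PosDef ∧ (κlow • q.2 - M).PosDef}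
  have hsnd : ConcaveOn ℝ univ fun q : ℝ × Matrix (Fin n) (Fin n) ℝ => q.2 :=
    (LinearMap.snd ℝ ℝ _).concaveOn convex_univ
  have hM_sub : ConcaveOn ℝ univ fun q : ℝ × Matrix (Fin n) (Fin n) ℝ => M - q.2 :=
    (concaveOn_const M convex_univ).sub ((LinearMap.snd ℝ ℝ _).convexOn convex_univ)
  have hlow_sub : ConcaveOn ℝ univ fun q : ℝ × Matrix (Fin n) (Fin n) ℝ => κlow • q.2 - M :=
    ((κlow • LinearMap.snd ℝ ℝ _).concaveOn convex_univ).sub (convexOn_const M convex_univ)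
  have hS : Convex ℝ S := by
    have hS_eq : S = Ioi κlow ×ˢ univ ∩ {q ∈ univ | q.2.PosDef} ∩
        {q ∈ univ | (M - q.2).PosDef} ∩ {q ∈ univ | (κlow • q.2 - M).PosDef} := by
      ext; simp [S, and_assoc]
    rw [hS_eq]
    exact ((((convex_Ioi κlow).prod convex_univ).inter hsnd.convex_setOf_posDef).inter
      hM_sub.convex_setOf_posDef).inter hlow_sub.convex_setOf_posDef
  rcases isEmpty_or_nonempty (Fin n) with hn | hn
  · exact (concaveOn_const 0 hS).congr fun q _ => by simp
  have hS_sub : S ⊆ {q | 0 < q.1 ∧ (q.1 • q.2 - M).PosDef} := by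
    rintro ⟨κ, D⟩ ⟨hκ, hD, -, hlowD⟩
    exact ⟨(pos_of_posDef_smul_sub hD hM.posSemidef hlowD).trans hκ,
      posDef_smul_sub_of_le hD hlowD hκ.le⟩
  exact ((hM_sub.log_det.subset (fun q hq => ⟨trivial, hq.2.2.1⟩) hS).add
    ((concaveOn_log_det_smul_sub hM.posSemidef).subset hS_sub hS)).add
    (hsnd.log_det.subset (fun q hq => ⟨trivial, hq.2.1⟩) hS)
end

section
/- Let f(X, w) = (1/n) Σᵢ fᵢ(wᵀxᵢ) with each fᵢ λ-strongly convex and L-smooth, κ₀ = L/λ. Then for any positive diagonal matrix D with κ(DXᵀXD) ≤ κ(XᵀX), one has κ(∇²_w f(XD, w)) ≤ κ₀² · κ(∇²_w f(X, w)) · κ(DXᵀXD)/κ(XᵀX). -/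
/-!
Writing `y₁, …, yₙ` for the rows of `Y`, the Hessian `n⁻¹ ∑ᵢ fᵢ''(⟨w, yᵢ⟩) yᵢ yᵢᵀ` is squeezed
between `(λ/n) YᵀY` and `(L/n) YᵀY` in the Loewner order, for `Y = X` and for `Y = XD`, whose
Gram matrix is `DXᵀXD`. Since the extreme eigenvalues are the extreme values of the Rayleigh
quotient, a sandwich `c N ⪯ M ⪯ C N` puts `κ(M)` and `κ(N)` within a factor `C/c = κ₀` of each
other. So `κ(∇²f(XD, w)) ≤ κ₀ κ(DXᵀXD)` and `κ(XᵀX) ≤ κ₀ κ(∇²f(X, w))`, and multiplying gives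
the claim.
-/

open Matrix

/-- Condition number of a symmetric matrix: ratio of largest to smallest eigenvalue. -/
noncomputable def kappa {p : ℕ} (A : Matrix (Fin p) (Fin p) ℝ) (hA : A.IsHermitian) : ℝ :=
  (⨆ i, hA.eigenvalues i) / (⨅ i, hA.eigenvalues i)

namespace Matrix

section Spectral

variable {ι : Type*} [Fintype ι] [DecidableEq ι] {M N : Matrix ι ι ℝ}

namespace IsHermitian

lemma dotProduct_eigenvectorBasis_self (hM : M.IsHermitian) (j : ι) :
    ⇑(hM.eigenvectorBasis j) ⬝ᵥ ⇑(hM.eigenvectorBasis j) = 1 := by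
  have h := orthonormal_iff_ite.mp hM.eigenvectorBasis.orthonormal j j
  rwa [if_pos rfl, EuclideanSpace.inner_eq_star_dotProduct, star_trivial] at h

lemma eigenvalues_eq_dotProduct (hM : M.IsHermitian) (j : ι) :
    hM.eigenvalues j = ⇑(hM.eigenvectorBasis j) ⬝ᵥ (M *ᵥ ⇑(hM.eigenvectorBasis j)) := by
  simpa using hM.eigenvalues_eq j

lemma dotProduct_self_eq_sum (hM : M.IsHermitian) (v : ι → ℝ) :
    v ⬝ᵥ v = ∑ j, (⇑(hM.eigenvectorBasis j) ⬝ᵥ v) ^ 2 := by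
  have h := hM.eigenvectorBasis.sum_inner_mul_inner (WithLp.toLp 2 v) (WithLp.toLp 2 v)
  simp only [EuclideanSpace.inner_eq_star_dotProduct, star_trivial] at h
  simp only [← h, sq, dotProduct_comm v]

lemma dotProduct_mulVec_eq_sum (hM : M.IsHermitian) (v : ι → ℝ) :
    v ⬝ᵥ (M *ᵥ v) = ∑ j, hM.eigenvalues j * (⇑(hM.eigenvectorBasis j) ⬝ᵥ v) ^ 2 := by
  have h := hM.eigenvectorBasis.sum_inner_mul_inner (WithLp.toLp 2 v) (WithLp.toLp 2 (M *ᵥ v))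
  simp only [EuclideanSpace.inner_eq_star_dotProduct, star_trivial] at h
  have hMT : Mᵀ = M := (isHermitian_iff_isSymm.mp hM).eq
  rw [dotProduct_comm, ← h]
  refine Finset.sum_congr rfl fun j _ => ?_
  rw [dotProduct_comm (M *ᵥ v), dotProduct_mulVec, ← mulVec_transpose, hMT,
    hM.mulVec_eigenvectorBasis, smul_dotProduct, smul_eq_mul]
  ring

lemma iInf_eigenvalues_mul_dotProduct_self_le (hM : M.IsHermitian) (v : ι → ℝ) :
    (⨅ i, hM.eigenvalues i) * (v ⬝ᵥ v) ≤ v ⬝ᵥ (M *ᵥ v) := by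
  rw [hM.dotProduct_self_eq_sum, hM.dotProduct_mulVec_eq_sum, Finset.mul_sum]
  gcongr with j
  exact ciInf_le (Finite.bddBelow_range _) j

lemma dotProduct_mulVec_le_iSup_eigenvalues_mul_dotProduct_self (hM : M.IsHermitian)
    (v : ι → ℝ) : v ⬝ᵥ (M *ᵥ v) ≤ (⨆ i, hM.eigenvalues i) * (v ⬝ᵥ v) := by
  rw [hM.dotProduct_self_eq_sum, hM.dotProduct_mulVec_eq_sum, Finset.mul_sum]
  gcongr with j
  exact le_ciSup (Finite.bddAbove_range _) j

variable [Nonempty ι]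

lemma iSup_eigenvalues_le_of_dotProduct_mulVec_le (hM : M.IsHermitian) (hN : N.IsHermitian)
    {C : ℝ} (hC : 0 ≤ C) (h : ∀ v, v ⬝ᵥ (M *ᵥ v) ≤ C * (v ⬝ᵥ (N *ᵥ v))) :
    (⨆ i, hM.eigenvalues i) ≤ C * ⨆ i, hN.eigenvalues i := by
  refine ciSup_le fun j => ?_
  set b := ⇑(hM.eigenvectorBasis j)
  calc hM.eigenvalues j = b ⬝ᵥ (M *ᵥ b) := hM.eigenvalues_eq_dotProduct j
    _ ≤ C * (b ⬝ᵥ (N *ᵥ b)) := h b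
    _ ≤ C * ((⨆ i, hN.eigenvalues i) * (b ⬝ᵥ b)) :=
      mul_le_mul_of_nonneg_left (hN.dotProduct_mulVec_le_iSup_eigenvalues_mul_dotProduct_self b) hC
    _ = C * ⨆ i, hN.eigenvalues i := by rw [hM.dotProduct_eigenvectorBasis_self, mul_one]

lemma mul_iInf_eigenvalues_le_of_le_dotProduct_mulVec (hM : M.IsHermitian) (hN : N.IsHermitian)
    {c : ℝ} (hc : 0 ≤ c) (h : ∀ v, c * (v ⬝ᵥ (N *ᵥ v)) ≤ v ⬝ᵥ (M *ᵥ v)) :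
    c * (⨅ i, hN.eigenvalues i) ≤ ⨅ i, hM.eigenvalues i := by
  refine le_ciInf fun j => ?_
  set b := ⇑(hM.eigenvectorBasis j)
  calc c * (⨅ i, hN.eigenvalues i) = c * ((⨅ i, hN.eigenvalues i) * (b ⬝ᵥ b)) := by
        rw [hM.dotProduct_eigenvectorBasis_self, mul_one]
    _ ≤ c * (b ⬝ᵥ (N *ᵥ b)) :=
      mul_le_mul_of_nonneg_left (hN.iInf_eigenvalues_mul_dotProduct_self_le b) hc
    _ ≤ b ⬝ᵥ (M *ᵥ b) := h b
    _ = hM.eigenvalues j := (hM.eigenvalues_eq_dotProduct j).symm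

lemma le_of_forall_mul_dotProduct_mulVec_le (hN : N.IsHermitian)
    (hNpos : 0 < ⨅ i, hN.eigenvalues i) {c C : ℝ}
    (h : ∀ v, c * (v ⬝ᵥ (N *ᵥ v)) ≤ C * (v ⬝ᵥ (N *ᵥ v))) : c ≤ C := by
  obtain ⟨j⟩ := ‹Nonempty ι›
  have hj := h (hN.eigenvectorBasis j)
  rw [← hN.eigenvalues_eq_dotProduct] at hj
  exact le_of_mul_le_mul_right hj (hNpos.trans_le (ciInf_le (Finite.bddBelow_range _) j))

end IsHermitian

lemma PosDef.iInf_eigenvalues_pos [Nonempty ι] (hM : M.PosDef) :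
    0 < ⨅ i, hM.1.eigenvalues i := by
  obtain ⟨j, hj⟩ := exists_eq_ciInf_of_finite (f := hM.1.eigenvalues)
  exact hj ▸ hM.eigenvalues_pos j

lemma PosDef.diagonal_mul_mul_diagonal {A : Matrix ι ι ℝ} (hA : A.PosDef) {d : ι → ℝ}
    (hd : ∀ j, d j ≠ 0) :
    (diagonal d * A * diagonal d).PosDef := by
  have hD : IsUnit (diagonal d) := isUnit_diagonal.mpr (Pi.isUnit_iff.mpr fun j => (hd j).isUnit)
  simpa [diagonal_conjTranspose] using hA.conjTranspose_mul_mul_same (mulVec_injective_of_isUnit hD)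

end Spectral

section Gram

variable {m ι : Type*} [Fintype m] [Fintype ι]

lemma dotProduct_mulVec_transpose_mul_self (Y : Matrix m ι ℝ) (v : ι → ℝ) :
    v ⬝ᵥ ((Yᵀ * Y) *ᵥ v) = ∑ i, (Y *ᵥ v) i ^ 2 := by
  rw [← mulVec_mulVec, dotProduct_mulVec, vecMul_transpose]
  simp only [dotProduct, sq]

lemma dotProduct_mulVec_sum_smul_vecMulVec_self (e : m → ℝ) (Y : Matrix m ι ℝ) (v : ι → ℝ) :
    v ⬝ᵥ ((∑ i, e i • vecMulVec (Y i) (Y i)) *ᵥ v) = ∑ i, e i * (Y *ᵥ v) i ^ 2 := by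
  simp only [sum_mulVec, smul_mulVec, dotProduct_sum, dotProduct_smul, dotProduct_mulVec,
    vecMul_vecMulVec, smul_dotProduct, smul_eq_mul, sq]
  exact Finset.sum_congr rfl fun i _ => by rw [dotProduct_comm v]; rfl

variable {n : ℕ} {e : Fin n → ℝ} (Y : Matrix (Fin n) ι ℝ) (v : ι → ℝ)

lemma mul_dotProduct_mulVec_gram_le_hessian {lam : ℝ} (he : ∀ i, lam ≤ e i) :
    lam / n * (v ⬝ᵥ ((Yᵀ * Y) *ᵥ v)) ≤
      v ⬝ᵥ (((n : ℝ)⁻¹ • ∑ i, e i • vecMulVec (Y i) (Y i)) *ᵥ v) := by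
  rw [smul_mulVec, dotProduct_smul, smul_eq_mul, dotProduct_mulVec_sum_smul_vecMulVec_self,
    dotProduct_mulVec_transpose_mul_self, div_eq_inv_mul, mul_assoc, Finset.mul_sum]
  gcongr with i
  exact he i

lemma hessian_le_mul_dotProduct_mulVec_gram {L : ℝ} (he : ∀ i, e i ≤ L) :
    v ⬝ᵥ (((n : ℝ)⁻¹ • ∑ i, e i • vecMulVec (Y i) (Y i)) *ᵥ v) ≤
      L / n * (v ⬝ᵥ ((Yᵀ * Y) *ᵥ v)) := by
  rw [smul_mulVec, dotProduct_smul, smul_eq_mul, dotProduct_mulVec_sum_smul_vecMulVec_self,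
    dotProduct_mulVec_transpose_mul_self, div_eq_inv_mul, mul_assoc, Finset.mul_sum _ _ L]
  gcongr with i
  exact he i

end Gram

lemma PosDef.nonempty_of_transpose_mul_self {m ι : Type*} [Fintype m] [Nonempty ι]
    {Y : Matrix m ι ℝ} (h : (Yᵀ * Y).PosDef) : Nonempty m := by
  by_contra hm
  rw [not_nonempty_iff] at hm
  obtain ⟨j⟩ := ‹Nonempty ι›
  simpa [mul_apply] using h.diag_pos (i := j)

end Matrix

section ConditionNumber

variable {p : ℕ} [Nonempty (Fin p)] {M N : Matrix (Fin p) (Fin p) ℝ}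

lemma kappa_pos (hM : M.PosDef) : 0 < kappa M hM.1 :=
  div_pos (hM.iInf_eigenvalues_pos.trans_le
    (ciInf_le_ciSup (Finite.bddBelow_range _) (Finite.bddAbove_range _))) hM.iInf_eigenvalues_pos

lemma kappa_le_of_dotProduct_mulVec_sandwich (hM : M.IsHermitian) (hN : N.IsHermitian)
    (hNpos : 0 < ⨅ i, hN.eigenvalues i) {c C : ℝ} (hc : 0 < c)
    (hlow : ∀ v, c * (v ⬝ᵥ (N *ᵥ v)) ≤ v ⬝ᵥ (M *ᵥ v))
    (hupp : ∀ v, v ⬝ᵥ (M *ᵥ v) ≤ C * (v ⬝ᵥ (N *ᵥ v))) :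
    kappa M hM ≤ C / c * kappa N hN := by
  have hcC : c ≤ C :=
    hN.le_of_forall_mul_dotProduct_mulVec_le hNpos fun v => (hlow v).trans (hupp v)
  have hsN : 0 < ⨆ i, hN.eigenvalues i :=
    hNpos.trans_le (ciInf_le_ciSup (Finite.bddBelow_range _) (Finite.bddAbove_range _))
  have hinf := hM.mul_iInf_eigenvalues_le_of_le_dotProduct_mulVec hN hc.le hlow
  have hsup := hM.iSup_eigenvalues_le_of_dotProduct_mulVec_le hN (hc.le.trans hcC) hupp
  calc kappa M hM ≤ (C * ⨆ i, hN.eigenvalues i) / (c * ⨅ i, hN.eigenvalues i) :=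
        div_le_div₀ (mul_nonneg (hc.le.trans hcC) hsN.le) hsup (by positivity) hinf
    _ = C / c * kappa N hN := by rw [kappa, mul_div_mul_comm]

lemma kappa_le_of_dotProduct_mulVec_sandwich' (hM : M.IsHermitian) (hN : N.IsHermitian)
    (hNpos : 0 < ⨅ i, hN.eigenvalues i) {c C : ℝ} (hc : 0 < c)
    (hlow : ∀ v, c * (v ⬝ᵥ (N *ᵥ v)) ≤ v ⬝ᵥ (M *ᵥ v))
    (hupp : ∀ v, v ⬝ᵥ (M *ᵥ v) ≤ C * (v ⬝ᵥ (N *ᵥ v))) :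
    kappa N hN ≤ C / c * kappa M hM := by
  have hC : 0 < C :=
    hc.trans_le (hN.le_of_forall_mul_dotProduct_mulVec_le hNpos fun v => (hlow v).trans (hupp v))
  have hMpos : 0 < ⨅ i, hM.eigenvalues i :=
    (mul_pos hc hNpos).trans_le (hM.mul_iInf_eigenvalues_le_of_le_dotProduct_mulVec hN hc.le hlow)
  have h := kappa_le_of_dotProduct_mulVec_sandwich hN hM hMpos (inv_pos.mpr hC)
    (fun v => (inv_mul_le_iff₀ hC).mpr (hupp v)) (fun v => (le_inv_mul_iff₀ hc).mpr (hlow v))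
  rwa [inv_div_inv] at h

lemma kappa_hessian_le_and_kappa_gram_le {n : ℕ} {e : Fin n → ℝ} {lam L : ℝ} (hlam : 0 < lam)
    (he : ∀ i, lam ≤ e i ∧ e i ≤ L) {Y : Matrix (Fin n) (Fin p) ℝ}
    (hM : M.IsHermitian) (hMY : M = (n : ℝ)⁻¹ • ∑ i, e i • vecMulVec (Y i) (Y i))
    (hN : N.PosDef) (hNY : N = Yᵀ * Y) :
    kappa M hM ≤ L / lam * kappa N hN.1 ∧ kappa N hN.1 ≤ L / lam * kappa M hM := by
  subst hMY hNY
  obtain ⟨i₀⟩ := hN.nonempty_of_transpose_mul_self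
  have hn : (0 : ℝ) < n := Nat.cast_pos.mpr i₀.pos
  have hratio : L / n / (lam / n) = L / lam := by field_simp
  have hlow := fun v => mul_dotProduct_mulVec_gram_le_hessian Y v fun i => (he i).1
  have hupp := fun v => hessian_le_mul_dotProduct_mulVec_gram Y v fun i => (he i).2
  rw [← hratio]
  exact ⟨kappa_le_of_dotProduct_mulVec_sandwich hM hN.1 hN.iInf_eigenvalues_pos
      (by positivity) hlow hupp,
    kappa_le_of_dotProduct_mulVec_sandwich' hM hN.1 hN.iInf_eigenvalues_pos
      (by positivity) hlow hupp⟩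

end ConditionNumber

theorem stmt16_general {n p : ℕ} (x : Fin n → Fin p → ℝ) (f : Fin n → ℝ → ℝ)
    (lam L : ℝ) (hlam : 0 < lam)
    (hbound : ∀ i z, lam ≤ deriv (deriv (f i)) z ∧ deriv (deriv (f i)) z ≤ L)
    (X : Matrix (Fin n) (Fin p) ℝ) (hX : X = Matrix.of x)
    (hpd : (Xᵀ * X).PosDef)
    (H : (Fin p → ℝ) → Matrix (Fin p) (Fin p) ℝ)
    (hH : H = fun w => (n : ℝ)⁻¹ •
      ∑ i, deriv (deriv (f i)) (∑ j, w j * x i j) • Matrix.vecMulVec (x i) (x i))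
    (hHh : ∀ w, (H w).IsHermitian)
    (d : Fin p → ℝ) (hd : ∀ j, 0 < d j)
    (HD : (Fin p → ℝ) → Matrix (Fin p) (Fin p) ℝ)
    (hHD : HD = fun w => (n : ℝ)⁻¹ •
      ∑ i, deriv (deriv (f i)) (∑ j, w j * (d j * x i j)) •
        Matrix.vecMulVec (fun j => d j * x i j) (fun j => d j * x i j))
    (hHDh : ∀ w, (HD w).IsHermitian)
    (hGh : (Matrix.diagonal d * (Xᵀ * X) * Matrix.diagonal d).IsHermitian) :
    ∀ w, kappa (HD w) (hHDh w) ≤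
      (L / lam) ^ 2 * kappa (H w) (hHh w) *
        (kappa (Matrix.diagonal d * (Xᵀ * X) * Matrix.diagonal d) hGh /
          kappa (Xᵀ * X) hpd.1) := by
  intro w
  obtain hp | hp := isEmpty_or_nonempty (Fin p)
  · simp [kappa]
  have hHX : H w = (n : ℝ)⁻¹ • ∑ i, deriv (deriv (f i)) (∑ j, w j * x i j) •
      vecMulVec (X i) (X i) := by
    subst hX hH; rfl
  have hHDXD : HD w = (n : ℝ)⁻¹ • ∑ i, deriv (deriv (f i)) (∑ j, w j * (d j * x i j)) •
      vecMulVec ((X * diagonal d) i) ((X * diagonal d) i) := by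
    have hrow : ∀ i, (X * diagonal d) i = fun j => d j * x i j := fun i => by
      ext j; simp [hX, mul_diagonal, mul_comm]
    simp only [hHD, hrow]
  have hGpd := hpd.diagonal_mul_mul_diagonal fun j => (hd j).ne'
  have hκHD := (kappa_hessian_le_and_kappa_gram_le hlam (fun i => hbound i _) (hHDh w) hHDXD
    hGpd (by simp only [transpose_mul, diagonal_transpose, Matrix.mul_assoc])).1
  have hκX := (kappa_hessian_le_and_kappa_gram_le hlam (fun i => hbound i _) (hHh w) hHX
    hpd rfl).2
  obtain ⟨i₀⟩ := hpd.nonempty_of_transpose_mul_self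
  have hL : 0 < L := hlam.trans_le ((hbound i₀ 0).1.trans (hbound i₀ 0).2)
  have hκXpos := kappa_pos hpd
  have hκGpos := kappa_pos hGpd
  calc kappa (HD w) (hHDh w) ≤ L / lam * kappa _ hGh := hκHD
    _ = L / lam * kappa _ hGh * (kappa _ hpd.1 / kappa _ hpd.1) := by
      rw [div_self hκXpos.ne', mul_one]
    _ ≤ L / lam * kappa _ hGh * (L / lam * kappa (H w) (hHh w) / kappa _ hpd.1) := by
      gcongr
    _ = _ := by ring

/-- For `f(X,w) = (1/n) Σᵢ fᵢ(wᵀxᵢ)` with each `fᵢ` λ-strongly convex and L-smooth and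
`κ₀ = L/λ`: for any positive diagonal `D` with `κ(DXᵀXD) ≤ κ(XᵀX)`,
`κ(∇²_w f(XD,w)) ≤ κ₀² · κ(∇²_w f(X,w)) · κ(DXᵀXD)/κ(XᵀX)`. -/
theorem stmt16 {n p : ℕ} (x : Fin n → Fin p → ℝ) (f : Fin n → ℝ → ℝ)
    (lam L : ℝ) (hlam : 0 < lam)
    (hbound : ∀ i z, lam ≤ deriv (deriv (f i)) z ∧ deriv (deriv (f i)) z ≤ L)
    (X : Matrix (Fin n) (Fin p) ℝ) (hX : X = Matrix.of x)
    (hpd : (Xᵀ * X).PosDef)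
    (H : (Fin p → ℝ) → Matrix (Fin p) (Fin p) ℝ)
    (hH : H = fun w => (n : ℝ)⁻¹ •
      ∑ i, deriv (deriv (f i)) (∑ j, w j * x i j) • Matrix.vecMulVec (x i) (x i))
    (hHh : ∀ w, (H w).IsHermitian)
    (d : Fin p → ℝ) (hd : ∀ j, 0 < d j)
    (HD : (Fin p → ℝ) → Matrix (Fin p) (Fin p) ℝ)
    (hHD : HD = fun w => (n : ℝ)⁻¹ •
      ∑ i, deriv (deriv (f i)) (∑ j, w j * (d j * x i j)) •
        Matrix.vecMulVec (fun j => d j * x i j) (fun j => d j * x i j))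
    (hHDh : ∀ w, (HD w).IsHermitian)
    (hGh : (Matrix.diagonal d * (Xᵀ * X) * Matrix.diagonal d).IsHermitian)
    (hκ : kappa (Matrix.diagonal d * (Xᵀ * X) * Matrix.diagonal d) hGh ≤
      kappa (Xᵀ * X) hpd.1) :
    ∀ w, kappa (HD w) (hHDh w) ≤
      (L / lam) ^ 2 * kappa (H w) (hHh w) *
        (kappa (Matrix.diagonal d * (Xᵀ * X) * Matrix.diagonal d) hGh /
          kappa (Xᵀ * X) hpd.1) :=
  stmt16_general x f lam L hlam hbound X hX hpd H hH hHh d hd HD hHD hHDh hGh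
end

section
/- Let D⁰, Z⁰ be symmetric positive definite matrices with ‖(D⁰)^{1/2} Z⁰ (D⁰)^{1/2} − I‖_F ≤ β for β ∈ (0,1), and let W = (D⁰)^{1/2}((D⁰)^{1/2} Z⁰ (D⁰)^{1/2})^{-1/2}(D⁰)^{1/2} be the Nesterov–Todd scaling matrix. Then W also equals (Z⁰)^{-1/2}((Z⁰)^{1/2} D⁰ (Z⁰)^{1/2})^{1/2}(Z⁰)^{-1/2}, and Tr(W^{1/2}(D⁰)^{-1}W^{1/2} − W^{1/2}Z⁰W^{1/2})² = Tr((Z⁰)^{-1}(D⁰)^{-1}) − 2n + Tr(D⁰Z⁰) ≤ β²/(1 − β). -/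
/-!
With `S = D^{1/2}` and `M = S Z S`, the scaling matrix `W = S M^{-1/2} S` solves `W Z W = D`,
hence `W D⁻¹ W = Z⁻¹`, and uniqueness of positive square roots applied to `Z^{1/2} W Z^{1/2}`
gives the second formula for `W`. Cycling traces through `W^{1/2} W^{1/2} = W` reduces the
squared trace to `Tr(Z⁻¹D⁻¹) − 2n + Tr(DZ) = Tr(M⁻¹) − 2n + Tr(M) = ∑ (μᵢ − 1)² / μᵢ` over the
eigenvalues `μᵢ` of `M`. The Frobenius bound says `∑ (μᵢ − 1)² ≤ β²`, so every `μᵢ ≥ 1 − β` and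
the sum is at most `β² / (1 − β)`.
-/

open Matrix

open scoped ComplexOrder in
noncomputable def Matrix.PosSemidef.sqrt {n : Type*} [Fintype n] [DecidableEq n] {𝕜 : Type*}
    [RCLike 𝕜] {A : Matrix n n 𝕜} (hA : A.PosSemidef) : Matrix n n 𝕜 :=
  hA.1.eigenvectorUnitary.1 * diagonal ((↑) ∘ (√·) ∘ hA.1.eigenvalues) *
    (star hA.1.eigenvectorUnitary : Matrix n n 𝕜)

noncomputable def frob {n : ℕ} (A : Matrix (Fin n) (Fin n) ℝ) : ℝ :=
  Real.sqrt (Matrix.trace (Aᵀ * A))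

namespace Matrix

namespace PosSemidef
open scoped MatrixOrder ComplexOrder

variable {m 𝕜 : Type*} [Fintype m] [DecidableEq m] [RCLike 𝕜] {A : Matrix m m 𝕜}

theorem sqrt_eq_cfcSqrt (hA : A.PosSemidef) : hA.sqrt = CFC.sqrt A := by
  rw [CFC.sqrt_eq_real_sqrt A hA.nonneg, cfcₙ_eq_cfc, hA.1.cfc_eq, IsHermitian.cfc,
    Unitary.conjStarAlgAut_apply]
  rfl

theorem sqrt_mul_sqrt (hA : A.PosSemidef) : hA.sqrt * hA.sqrt = A := by
  rw [hA.sqrt_eq_cfcSqrt]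
  exact CFC.sqrt_mul_sqrt_self A hA.nonneg

theorem posSemidef_sqrt (hA : A.PosSemidef) : hA.sqrt.PosSemidef := by
  rw [hA.sqrt_eq_cfcSqrt]
  exact (CFC.sqrt_nonneg A).posSemidef

theorem eq_sqrt_of_sq_eq {B : Matrix m m 𝕜} (hA : A.PosSemidef) (hB : B.PosSemidef)
    (h : A ^ 2 = B) : A = hB.sqrt := by
  rw [hB.sqrt_eq_cfcSqrt]
  exact (CFC.sqrt_unique (by rw [← h, sq]) hA.nonneg).symm

end PosSemidef

open scoped ComplexOrder in
theorem PosDef.isUnit_sqrt {m 𝕜 : Type*} [Fintype m] [DecidableEq m] [RCLike 𝕜]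
    {A : Matrix m m 𝕜} (hA : A.PosDef) : IsUnit hA.posSemidef.sqrt := by
  rw [isUnit_iff_isUnit_det, ← isUnit_pow_iff two_ne_zero, ← det_pow, sq,
    hA.posSemidef.sqrt_mul_sqrt, ← isUnit_iff_isUnit_det]
  exact hA.isUnit

theorem IsHermitian.trace_cfc_s17 {m 𝕜 : Type*} [Fintype m] [DecidableEq m] [RCLike 𝕜]
    {A : Matrix m m 𝕜} (hA : A.IsHermitian) (f : ℝ → ℝ) :
    trace (cfc f A) = ∑ i, (f (hA.eigenvalues i) : 𝕜) := by
  rw [hA.cfc_eq, IsHermitian.cfc, Unitary.conjStarAlgAut_apply, trace_mul_cycle,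
    Unitary.coe_star_mul_self, one_mul, trace_diagonal]
  rfl

section Algebra

variable {m R : Type*} [Fintype m] [CommRing R]

theorem trace_conj_eq_trace_mul {S D : Matrix m m R} (hS : S * S = D) (Z : Matrix m m R) :
    trace (S * Z * S) = trace (D * Z) := by
  rw [trace_mul_cycle, hS]

theorem trace_conj_mul_conj {T W : Matrix m m R} (hT : T * T = W) (X Y : Matrix m m R) :
    trace (T * X * T * (T * Y * T)) = trace (X * (W * Y * W)) := by
  rw [← hT]
  calc trace (T * X * T * (T * Y * T)) = trace (T * (X * (T * T * Y * T))) := by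
        simp only [mul_assoc]
    _ = trace (X * (T * T * Y * (T * T))) := by
        rw [trace_mul_comm]
        simp only [mul_assoc]

variable [DecidableEq m]

theorem trace_inv_conj_eq_trace_inv_mul_inv {S D : Matrix m m R} (hS : S * S = D)
    (Z : Matrix m m R) : trace (S * Z * S)⁻¹ = trace (Z⁻¹ * D⁻¹) := by
  rw [mul_inv_rev, mul_inv_rev, ← mul_assoc, trace_mul_cycle, ← mul_inv_rev, hS,
    trace_mul_comm]

theorem conj_inv_mul_conj_eq_mul_self {S Q Z : Matrix m m R} (hQ : Q * Q = S * Z * S)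
    (hQu : IsUnit Q) : S * Q⁻¹ * S * Z * (S * Q⁻¹ * S) = S * S := by
  have hQd : IsUnit Q.det := (isUnit_iff_isUnit_det Q).mp hQu
  calc S * Q⁻¹ * S * Z * (S * Q⁻¹ * S) = S * (Q⁻¹ * (S * Z * S) * Q⁻¹) * S := by
        simp only [mul_assoc]
    _ = S * S := by
        rw [← hQ, mul_assoc, nonsing_inv_mul_cancel_left _ _ hQd, mul_nonsing_inv _ hQd, one_mul]

theorem mul_inv_mul_eq_inv_of_mul_mul_eq {W Z D : Matrix m m R} (hW : IsUnit W)
    (h : W * Z * W = D) : W * D⁻¹ * W = Z⁻¹ := by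
  have hWd : IsUnit W.det := (isUnit_iff_isUnit_det W).mp hW
  rw [← h, mul_inv_rev, mul_inv_rev, mul_nonsing_inv_cancel_left _ _ hWd, mul_assoc,
    nonsing_inv_mul _ hWd, mul_one]

theorem trace_conj_sub_conj_sq {T W Z D : Matrix m m R} (hT : T * T = W) (hZ : W * Z * W = D)
    (hD : W * D⁻¹ * W = Z⁻¹) (hDu : IsUnit D) :
    trace ((T * D⁻¹ * T - T * Z * T) ^ 2) =
      trace (Z⁻¹ * D⁻¹) - 2 * Fintype.card m + trace (D * Z) := by
  have hDd : IsUnit D.det := (isUnit_iff_isUnit_det D).mp hDu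
  have hcross : trace (T * D⁻¹ * T * (T * Z * T)) = Fintype.card m := by
    rw [trace_conj_mul_conj hT, hZ, nonsing_inv_mul _ hDd, trace_one]
  rw [sq, sub_mul, mul_sub, mul_sub, trace_sub, trace_sub, trace_sub, trace_mul_comm (T * Z * T),
    hcross, trace_conj_mul_conj hT, trace_conj_mul_conj hT, hD, hZ, trace_mul_comm Z⁻¹,
    trace_mul_comm Z]
  ring

end Algebra

open scoped ComplexOrder in
theorem PosSemidef.eq_inv_mul_sqrt_mul_inv_of_mul_mul_eq {m 𝕜 : Type*} [Fintype m] [DecidableEq m]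
    [RCLike 𝕜] {W Z D S : Matrix m m 𝕜} (hW : W.PosSemidef) (hS : S.IsHermitian) (hSu : IsUnit S)
    (hSS : S * S = Z) (hSDS : (S * D * S).PosSemidef) (h : W * Z * W = D) :
    W = S⁻¹ * hSDS.sqrt * S⁻¹ := by
  have hSd : IsUnit S.det := (isUnit_iff_isUnit_det S).mp hSu
  have hSWS : (S * W * S).PosSemidef := by
    simpa only [hS.eq] using hW.mul_mul_conjTranspose_same S
  have hsq : (S * W * S) ^ 2 = S * D * S := by
    rw [← h, ← hSS]
    simp only [sq, mul_assoc]
  rw [← hSWS.eq_sqrt_of_sq_eq hSDS hsq, mul_assoc, mul_assoc, mul_nonsing_inv _ hSd, mul_one,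
    nonsing_inv_mul_cancel_left _ _ hSd]

end Matrix

theorem sum_sq_sub_one_div_le {ι : Type*} [Fintype ι] {μ : ι → ℝ} {β : ℝ} (hβ : 0 ≤ β)
    (hβ1 : β < 1) (h : ∑ i, (μ i - 1) ^ 2 ≤ β ^ 2) :
    ∑ i, (μ i - 1) ^ 2 / μ i ≤ β ^ 2 / (1 - β) := by
  have h1β : 0 < 1 - β := by linarith
  have hlow : ∀ i, 1 - β ≤ μ i := fun i => by
    have : (μ i - 1) ^ 2 ≤ β ^ 2 :=
      (Finset.single_le_sum (fun j _ => sq_nonneg (μ j - 1)) (Finset.mem_univ i)).trans h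
    nlinarith [abs_le_of_sq_le_sq' this hβ]
  calc ∑ i, (μ i - 1) ^ 2 / μ i ≤ ∑ i, (μ i - 1) ^ 2 / (1 - β) :=
        Finset.sum_le_sum fun i _ => div_le_div_of_nonneg_left (sq_nonneg _) h1β (hlow i)
    _ = (∑ i, (μ i - 1) ^ 2) / (1 - β) := by rw [Finset.sum_div]
    _ ≤ β ^ 2 / (1 - β) := div_le_div_of_nonneg_right h h1β.le

theorem Matrix.IsSymm.trace_sq_le_of_frob_le {n : ℕ} {A : Matrix (Fin n) (Fin n) ℝ} {β : ℝ}
    (hA : A.IsSymm) (h : frob A ≤ β) : trace (A ^ 2) ≤ β ^ 2 := by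
  rw [frob, Real.sqrt_le_iff, hA.eq] at h
  rw [sq]
  exact h.2

open scoped MatrixOrder in
theorem Matrix.PosDef.trace_inv_sub_two_mul_card_add_trace_le {m : Type*} [Fintype m]
    [DecidableEq m] {M : Matrix m m ℝ} (hM : M.PosDef) {β : ℝ} (hβ : 0 ≤ β) (hβ1 : β < 1)
    (h : trace ((M - 1) ^ 2) ≤ β ^ 2) :
    trace M⁻¹ - 2 * Fintype.card m + trace M ≤ β ^ 2 / (1 - β) := by
  -- discharges the `IsSelfAdjoint M` side conditions of the `cfc` lemmas below
  have hMsa : IsSelfAdjoint M := hM.1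
  set μ := hM.1.eigenvalues
  have htrace : trace M = ∑ i, μ i := by simp [hM.1.trace_eq_sum_eigenvalues, μ]
  have htrace_inv : trace M⁻¹ = ∑ i, (μ i)⁻¹ := by
    rw [nonsing_inv_eq_ringInverse, ← cfc_ringInverse_id (R := ℝ) M hM.isUnit, hM.1.trace_cfc_s17]
    rfl
  have htrace_sq : trace ((M - 1) ^ 2) = ∑ i, (μ i - 1) ^ 2 := by
    have hcfc : cfc (fun x : ℝ => (x - 1) ^ 2) M = (M - 1) ^ 2 := by
      rw [cfc_pow (fun x : ℝ => x - 1) 2 M, cfc_sub (fun x : ℝ => x) (fun _ => 1) M, cfc_id' ℝ M,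
        cfc_const_one ℝ M]
    rw [← hcfc, hM.1.trace_cfc_s17]
    rfl
  have hsum : trace M⁻¹ - 2 * Fintype.card m + trace M = ∑ i, (μ i - 1) ^ 2 / μ i := by
    rw [htrace, htrace_inv, ← Finset.card_univ, Finset.cast_card, Finset.mul_sum,
      ← Finset.sum_sub_distrib, ← Finset.sum_add_distrib]
    refine Finset.sum_congr rfl fun i _ => ?_
    have hμ : μ i ≠ 0 := (hM.eigenvalues_pos i).ne'
    field_simp
    ring
  rw [hsum]
  exact sum_sq_sub_one_div_le hβ hβ1 (htrace_sq ▸ h)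

/-- Properties of the Nesterov–Todd scaling matrix
`W = D^{1/2}(D^{1/2} Z D^{1/2})^{-1/2} D^{1/2}`: it equals
`Z^{-1/2}(Z^{1/2} D Z^{1/2})^{1/2} Z^{-1/2}`, and
`Tr(W^{1/2} D⁻¹ W^{1/2} − W^{1/2} Z W^{1/2})² = Tr(Z⁻¹D⁻¹) − 2n + Tr(DZ) ≤ β²/(1−β)`. -/
theorem stmt17 {n : ℕ} (D Z : Matrix (Fin n) (Fin n) ℝ) (hD : D.PosDef) (hZ : Z.PosDef)
    (β : ℝ) (hβ : β ∈ Set.Ioo (0 : ℝ) 1)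
    (hfr : frob (hD.posSemidef.sqrt * Z * hD.posSemidef.sqrt - 1) ≤ β)
    (hM : (hD.posSemidef.sqrt * Z * hD.posSemidef.sqrt).PosDef)
    (hMZ : (hZ.posSemidef.sqrt * D * hZ.posSemidef.sqrt).PosDef)
    (W : Matrix (Fin n) (Fin n) ℝ)
    (hWdef : W = hD.posSemidef.sqrt * (hM.posSemidef.sqrt)⁻¹ * hD.posSemidef.sqrt)
    (hW : W.PosDef) :
    W = (hZ.posSemidef.sqrt)⁻¹ * hMZ.posSemidef.sqrt * (hZ.posSemidef.sqrt)⁻¹ ∧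
    Matrix.trace ((hW.posSemidef.sqrt * D⁻¹ * hW.posSemidef.sqrt -
        hW.posSemidef.sqrt * Z * hW.posSemidef.sqrt) ^ 2) =
      Matrix.trace (Z⁻¹ * D⁻¹) - 2 * n + Matrix.trace (D * Z) ∧
    Matrix.trace (Z⁻¹ * D⁻¹) - 2 * n + Matrix.trace (D * Z) ≤ β ^ 2 / (1 - β) := by
  obtain ⟨hβ0, hβ1⟩ := hβ
  have hDsqrt := hD.posSemidef.sqrt_mul_sqrt
  have hWZW : W * Z * W = D := by
    rw [hWdef, conj_inv_mul_conj_eq_mul_self hM.posSemidef.sqrt_mul_sqrt hM.isUnit_sqrt, hDsqrt]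
  refine ⟨hW.posSemidef.eq_inv_mul_sqrt_mul_inv_of_mul_mul_eq hZ.posSemidef.posSemidef_sqrt.1
    hZ.isUnit_sqrt hZ.posSemidef.sqrt_mul_sqrt hMZ.posSemidef hWZW, ?_, ?_⟩
  · simpa using trace_conj_sub_conj_sq hW.posSemidef.sqrt_mul_sqrt hWZW
      (mul_inv_mul_eq_inv_of_mul_mul_eq hW.isUnit hWZW) hD.isUnit
  · have hM1 : (hD.posSemidef.sqrt * Z * hD.posSemidef.sqrt - 1).IsSymm :=
      isHermitian_iff_isSymm.mp (hM.1.sub isHermitian_one)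
    simpa [trace_conj_eq_trace_mul hDsqrt, trace_inv_conj_eq_trace_inv_mul_inv hDsqrt] using
      hM.trace_inv_sub_two_mul_card_add_trace_le hβ0.le hβ1 (hM1.trace_sq_le_of_frob_le hfr)
end
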